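/- Let $\sigma : \mathbb{R}^d \to \mathbb{R}^d$ be Lipschitz with constant $L_\sigma$ and $\sigma(0)=0$. Suppose $K : [0,1] \to \mathbb{R}^{d\times d}$, $b : [0,1] \to \mathbb{R}^d$ are continuous, and for each $n$, $K^{(n)} : \{0,\dots,n-1\} \to \mathbb{R}^{d\times d}$ and $b^{(n)} : \{0,\dots,n-1\} \to \mathbb{R}^d$ are uniformly bounded and satisfy $\sum_{i=1}^n\left(\int_{(i-1)/n}^{i/n}\|K(t) - K_{i-1}^{(n)}\|dt\right)^2 = o(1/n)$ and the analogous condition for $b^{(n)}$, $b$. Let $X$ solve $\dot X = \sigma(KX+b)$, $X(0)=x$, and let $X_0^{(n)} = x$, $X_{i+1}^{(n)} = X_i^{(n)} + \frac1n\sigma(K_i^{(n)}X_i^{(n)} + b_i^{(n)})$. Then $\sup_{0\leq i\leq n-1}\sup_{t\in[i/n,(i+1)/n]}\|X(t) - X_i^{(n)}\| \to 0$ as $n \to \infty$. -/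

import Mathlib

/-! The grid errors `eᵢ = ‖X (i/n) - Xᵢ⁽ⁿ⁾‖` obey the one-step recursion
`eᵢ₊₁ ≤ (1 + Lσ M / n) eᵢ + δᵢ`: on the `i`-th cell, the fundamental theorem of calculus compares
`X` with the Euler step, and the Lipschitz bound on `σ` splits the integrand into the cellwise `L¹`
distances of the parameters (weighted by `sup ‖X‖`) and an `O(1/n²)` drift term. Discrete Gronwall
gives `eᵢ ≤ e^{Lσ M} ∑ δ`, and by Cauchy–Schwarz `∑ᵢ aᵢ ≤ (n ∑ᵢ aᵢ²)^{1/2}`, which tends to `0`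
under the `o(1/n)` hypotheses. Inside a cell `X` moves by `O(1/n)` only. -/

open Set Filter Asymptotics Finset Topology MeasureTheory
open scoped NNReal

theorem le_one_add_pow_mul_add_sum_of_le_one_add_mul_add {q : ℝ} (hq : 0 ≤ q) {e δ : ℕ → ℝ}
    (hδ : ∀ j, 0 ≤ δ j) {n : ℕ} (hrec : ∀ i < n, e (i + 1) ≤ (1 + q) * e i + δ i) :
    ∀ i ≤ n, e i ≤ (1 + q) ^ i * (e 0 + ∑ j ∈ range i, δ j) := by
  intro i hi
  induction i with
  | zero => simp
  | succ i ih =>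
    have hpow : 1 ≤ (1 + q) ^ (i + 1) := one_le_pow₀ (by linarith)
    calc e (i + 1) ≤ (1 + q) * e i + δ i := hrec i hi
      _ ≤ (1 + q) * ((1 + q) ^ i * (e 0 + ∑ j ∈ range i, δ j)) + (1 + q) ^ (i + 1) * δ i := by
          gcongr
          · exact ih (by omega)
          · exact le_mul_of_one_le_left (hδ i) hpow
      _ = (1 + q) ^ (i + 1) * (e 0 + ∑ j ∈ range (i + 1), δ j) := by
          rw [sum_range_succ]; ring

theorem tendsto_sum_of_sum_sq_isLittleO_inv {a : ℕ → ℕ → ℝ}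
    (h : (fun n : ℕ => ∑ i ∈ range n, a n i ^ 2) =o[atTop] fun n : ℕ => 1 / (n : ℝ)) :
    Tendsto (fun n : ℕ => ∑ i ∈ range n, a n i) atTop (𝓝 0) := by
  have hmul : Tendsto (fun n : ℕ => (n : ℝ) * ∑ i ∈ range n, a n i ^ 2) atTop (𝓝 0) := by
    simpa [div_div_eq_mul_div, mul_comm] using h.tendsto_div_nhds_zero
  have hsq : Tendsto (fun n : ℕ => (∑ i ∈ range n, a n i) ^ 2) atTop (𝓝 0) :=
    squeeze_zero (fun n => sq_nonneg _)
      (fun n => by simpa using sq_sum_le_card_mul_sum_sq (s := range n) (f := a n)) hmul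
  rw [tendsto_zero_iff_abs_tendsto_zero]
  simpa [Function.comp_def, Real.sqrt_sq_eq_abs] using (Real.continuous_sqrt.tendsto 0).comp hsq

variable {E : Type*} [NormedAddCommGroup E] [NormedSpace ℝ E]

theorem norm_sub_add_smul_le_add_integral [CompleteSpace E] {X f : ℝ → E} {φ : ℝ → ℝ}
    {s t : ℝ} (hst : s ≤ t) (hX : ∀ u ∈ Icc s t, HasDerivAt X (f u) u)
    (hf : ContinuousOn f (Icc s t)) (hφ : IntervalIntegrable φ volume s t) (v y : E)
    (hfv : ∀ u ∈ Icc s t, ‖f u - v‖ ≤ φ u) :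
    ‖X t - (y + (t - s) • v)‖ ≤ ‖X s - y‖ + ∫ u in s..t, φ u := by
  rw [← uIcc_of_le hst] at hX hf
  have hfint : IntervalIntegrable f volume s t := hf.intervalIntegrable
  have hsplit : X t - (y + (t - s) • v) = (X s - y) + ∫ u in s..t, (f u - v) := by
    rw [intervalIntegral.integral_sub hfint intervalIntegrable_const,
      intervalIntegral.integral_eq_sub_of_hasDerivAt hX hfint, intervalIntegral.integral_const]
    abel
  calc ‖X t - (y + (t - s) • v)‖ ≤ ‖X s - y‖ + ‖∫ u in s..t, (f u - v)‖ := by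
        rw [hsplit]; exact norm_add_le _ _
    _ ≤ ‖X s - y‖ + ∫ u in s..t, φ u := by
        gcongr
        exact intervalIntegral.norm_integral_le_of_norm_le hst
          (Eventually.of_forall fun u hu => hfv u (Ioc_subset_Icc_self hu)) hφ

theorem LipschitzWith.norm_sub_apply_affine_le {F G : Type*} [NormedAddCommGroup F]
    [NormedSpace ℝ F] [SeminormedAddCommGroup G] {σ : F → G} {L : ℝ≥0} (hσ : LipschitzWith L σ)
    (T A : E →L[ℝ] F) (x y : E) (c c' : F) :
    ‖σ (T x + c) - σ (A y + c')‖ ≤ L * (‖T - A‖ * ‖x‖ + ‖A‖ * ‖x - y‖ + ‖c - c'‖) := by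
  have hsplit : (T x + c) - (A y + c') = (T - A) x + A (x - y) + (c - c') := by
    simp only [sub_apply, map_sub]; abel
  calc ‖σ (T x + c) - σ (A y + c')‖ ≤ L * ‖(T x + c) - (A y + c')‖ := hσ.norm_sub_le _ _
    _ ≤ L * (‖T - A‖ * ‖x‖ + ‖A‖ * ‖x - y‖ + ‖c - c'‖) := by
        rw [hsplit]
        gcongr
        refine (norm_add₃_le).trans ?_
        gcongr <;> exact ContinuousLinearMap.le_opNorm _ _

theorem norm_sub_eulerStep_le [CompleteSpace E] {σ : E → E} {L : ℝ≥0} (hσ : LipschitzWith L σ)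
    {K : ℝ → E →L[ℝ] E} {b X : ℝ → E} {s t R C M : ℝ} (hst : s ≤ t)
    (hK : ContinuousOn K (Icc s t)) (hb : ContinuousOn b (Icc s t))
    (hX : ∀ u ∈ Icc s t, HasDerivAt X (σ (K u (X u) + b u)) u) (hR : ∀ u ∈ Icc s t, ‖X u‖ ≤ R)
    (hC : ∀ u ∈ Icc s t, ‖σ (K u (X u) + b u)‖ ≤ C) {A : E →L[ℝ] E} (hA : ‖A‖ ≤ M) (c y : E) :
    ‖X t - (y + (t - s) • σ (A y + c))‖ ≤ (1 + L * M * (t - s)) * ‖X s - y‖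
      + L * (R * (∫ u in s..t, ‖K u - A‖) + (∫ u in s..t, ‖b u - c‖) + M * C * (t - s) ^ 2) := by
  have hXcont : ContinuousOn X (Icc s t) := fun u hu => (hX u hu).continuousAt.continuousWithinAt
  have hs : s ∈ Icc s t := left_mem_Icc.mpr hst
  have hXs : ∀ u ∈ Icc s t, ‖X u - X s‖ ≤ C * (t - s) := fun u hu => by
    calc ‖X u - X s‖ ≤ C * ‖u - s‖ := (convex_Icc s t).norm_image_sub_le_of_norm_hasDerivWithin_le
          (fun u hu => (hX u hu).hasDerivWithinAt) hC hs hu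
      _ ≤ C * (t - s) := by
          have hC0 := (norm_nonneg _).trans (hC s hs)
          rw [Real.norm_of_nonneg (by linarith [hu.1])]
          gcongr; exact hu.2
  have hKint : IntervalIntegrable (fun u => ‖K u - A‖) volume s t :=
    ((hK.sub continuousOn_const).norm.mono (uIcc_of_le hst).subset).intervalIntegrable
  have hbint : IntervalIntegrable (fun u => ‖b u - c‖) volume s t :=
    ((hb.sub continuousOn_const).norm.mono (uIcc_of_le hst).subset).intervalIntegrable
  refine (norm_sub_add_smul_le_add_integral hst hX
    (hσ.continuous.comp_continuousOn ((hK.clm_apply hXcont).add hb))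
    (φ := fun u => L * (‖K u - A‖ * R + M * (C * (t - s) + ‖X s - y‖) + ‖b u - c‖))
    (((hKint.mul_const R).add intervalIntegrable_const).add hbint |>.const_mul _) _ _
    fun u hu => ?_).trans_eq ?_
  · refine (hσ.norm_sub_apply_affine_le _ _ _ _ _ _).trans ?_
    have hXy : ‖X u - y‖ ≤ C * (t - s) + ‖X s - y‖ :=
      (norm_sub_le_norm_sub_add_norm_sub _ _ _).trans (by gcongr; exact hXs u hu)
    gcongr
    · exact hR u hu
    · exact (norm_nonneg _).trans hA
  · rw [intervalIntegral.integral_const_mul, intervalIntegral.integral_add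
      ((hKint.mul_const R).add intervalIntegrable_const) hbint, intervalIntegral.integral_add
      (hKint.mul_const R) intervalIntegrable_const, intervalIntegral.integral_mul_const,
      intervalIntegral.integral_const, smul_eq_mul]
    ring

theorem Icc_div_natCast_subset_Icc_zero_one {n j : ℕ} (hj : j < n) :
    Icc ((j : ℝ) / n) (((j : ℝ) + 1) / n) ⊆ Icc 0 1 :=
  Icc_subset_Icc (by positivity) (div_le_one_of_le₀ (by exact_mod_cast hj) (Nat.cast_nonneg n))

section ForwardPass

variable [CompleteSpace E] {σ : E → E} {L : ℝ≥0} {K : ℝ → E →L[ℝ] E} {b X : ℝ → E}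
  {R C M : ℝ} {n : ℕ} {Kn : ℕ → E →L[ℝ] E} {bn Xn : ℕ → E}

theorem norm_sub_forwardPass_grid_le (hσ : LipschitzWith L σ) (hM : 0 ≤ M)
    (hK : ContinuousOn K (Icc 0 1)) (hb : ContinuousOn b (Icc 0 1))
    (hX : ∀ t ∈ Icc (0 : ℝ) 1, HasDerivAt X (σ (K t (X t) + b t)) t)
    (hR : ∀ t ∈ Icc (0 : ℝ) 1, ‖X t‖ ≤ R) (hC : ∀ t ∈ Icc (0 : ℝ) 1, ‖σ (K t (X t) + b t)‖ ≤ C)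
    (hn : 0 < n) (hKn : ∀ i < n, ‖Kn i‖ ≤ M) (hXn0 : Xn 0 = X 0)
    (hXn : ∀ i < n, Xn (i + 1) = Xn i + (n : ℝ)⁻¹ • σ (Kn i (Xn i) + bn i)) {i : ℕ} (hi : i ≤ n) :
    ‖X (i / n) - Xn i‖ ≤ Real.exp (L * M) *
      (L * (R * (∑ j ∈ range n, ∫ u in (j : ℝ) / n..((j : ℝ) + 1) / n, ‖K u - Kn j‖)
        + (∑ j ∈ range n, ∫ u in (j : ℝ) / n..((j : ℝ) + 1) / n, ‖b u - bn j‖) + M * C / n)) := by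
  set δ : ℕ → ℝ := fun j => L * (R * (∫ u in (j : ℝ) / n..((j : ℝ) + 1) / n, ‖K u - Kn j‖)
    + (∫ u in (j : ℝ) / n..((j : ℝ) + 1) / n, ‖b u - bn j‖) + M * C * (n : ℝ)⁻¹ ^ 2) with hδ
  have hC0 : 0 ≤ C := (norm_nonneg _).trans (hC 0 (left_mem_Icc.mpr zero_le_one))
  have hcell : ∀ j : ℕ, (j : ℝ) / n ≤ ((j : ℝ) + 1) / n := fun j => by gcongr; linarith
  have hδ0 : ∀ j, 0 ≤ δ j := fun j => by
    have hR0 := (norm_nonneg _).trans (hR 0 (left_mem_Icc.mpr zero_le_one))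
    have hKj := intervalIntegral.integral_nonneg (μ := volume) (hcell j)
      fun u _ => norm_nonneg (K u - Kn j)
    have hbj := intervalIntegral.integral_nonneg (μ := volume) (hcell j)
      fun u _ => norm_nonneg (b u - bn j)
    positivity
  set e : ℕ → ℝ := fun j => ‖X (j / n) - Xn j‖ with he
  have hstep : ∀ j < n, e (j + 1) ≤ (1 + L * M * (n : ℝ)⁻¹) * e j + δ j := fun j hj => by
    have hsub := Icc_div_natCast_subset_Icc_zero_one hj
    have hlen : ((j : ℝ) + 1) / n - j / n = (n : ℝ)⁻¹ := by ring
    have := norm_sub_eulerStep_le hσ (hcell j) (hK.mono hsub) (hb.mono hsub)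
      (fun u hu => hX u (hsub hu)) (fun u hu => hR u (hsub hu)) (fun u hu => hC u (hsub hu))
      (hKn j hj) (bn j) (Xn j)
    rw [hlen, ← hXn j hj] at this
    simpa only [he, Nat.cast_succ] using this
  have hgronwall := le_one_add_pow_mul_add_sum_of_le_one_add_mul_add (by positivity) hδ0 hstep i hi
  have hpow : (1 + L * M * (n : ℝ)⁻¹) ^ i ≤ Real.exp (L * M) := calc
    (1 + L * M * (n : ℝ)⁻¹) ^ i ≤ (1 + L * M * (n : ℝ)⁻¹) ^ n :=
      pow_le_pow_right₀ (by simp only [le_add_iff_nonneg_right]; positivity) hi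
    _ ≤ Real.exp (L * M * (n : ℝ)⁻¹) ^ n := by
        gcongr; linarith [Real.add_one_le_exp (L * M * (n : ℝ)⁻¹)]
    _ = Real.exp (L * M) := by rw [← Real.exp_nat_mul]; field_simp
  have hsum : ∑ j ∈ range n, δ j
      = L * (R * (∑ j ∈ range n, ∫ u in (j : ℝ) / n..((j : ℝ) + 1) / n, ‖K u - Kn j‖)
        + (∑ j ∈ range n, ∫ u in (j : ℝ) / n..((j : ℝ) + 1) / n, ‖b u - bn j‖) + M * C / n) := by
    simp only [hδ, ← mul_sum, sum_add_distrib, sum_const, card_range, nsmul_eq_mul]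
    field_simp
  calc ‖X (i / n) - Xn i‖ ≤ (1 + L * M * (n : ℝ)⁻¹) ^ i * ∑ j ∈ range i, δ j := by
        simpa [he, hXn0] using hgronwall
    _ ≤ Real.exp (L * M) * ∑ j ∈ range n, δ j := by
        gcongr
        · exact sum_nonneg fun j _ => hδ0 j
        · exact fun j _ _ => hδ0 j
    _ = _ := by rw [hsum]

theorem norm_sub_forwardPass_le (hσ : LipschitzWith L σ) (hM : 0 ≤ M)
    (hK : ContinuousOn K (Icc 0 1)) (hb : ContinuousOn b (Icc 0 1))
    (hX : ∀ t ∈ Icc (0 : ℝ) 1, HasDerivAt X (σ (K t (X t) + b t)) t)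
    (hR : ∀ t ∈ Icc (0 : ℝ) 1, ‖X t‖ ≤ R) (hC : ∀ t ∈ Icc (0 : ℝ) 1, ‖σ (K t (X t) + b t)‖ ≤ C)
    (hKn : ∀ i < n, ‖Kn i‖ ≤ M) (hXn0 : Xn 0 = X 0)
    (hXn : ∀ i < n, Xn (i + 1) = Xn i + (n : ℝ)⁻¹ • σ (Kn i (Xn i) + bn i)) {i : ℕ} (hi : i < n)
    {t : ℝ} (ht : t ∈ Icc ((i : ℝ) / n) (((i : ℝ) + 1) / n)) :
    ‖X t - Xn i‖ ≤ C / n + Real.exp (L * M) *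
      (L * (R * (∑ j ∈ range n, ∫ u in (j : ℝ) / n..((j : ℝ) + 1) / n, ‖K u - Kn j‖)
        + (∑ j ∈ range n, ∫ u in (j : ℝ) / n..((j : ℝ) + 1) / n, ‖b u - bn j‖) + M * C / n)) := by
  have hsub := Icc_div_natCast_subset_Icc_zero_one hi
  have hleft : (i : ℝ) / n ∈ Icc ((i : ℝ) / n) (((i : ℝ) + 1) / n) :=
    left_mem_Icc.mpr (ht.1.trans ht.2)
  have hC0 : 0 ≤ C := (norm_nonneg _).trans (hC _ (hsub ht))
  have hdrift : ‖X t - X (i / n)‖ ≤ C / n := calc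
    ‖X t - X (i / n)‖ ≤ C * ‖t - i / n‖ :=
      (convex_Icc _ _).norm_image_sub_le_of_norm_hasDerivWithin_le
        (fun u hu => (hX u (hsub hu)).hasDerivWithinAt) (fun u hu => hC u (hsub hu)) hleft ht
    _ ≤ C * (((i : ℝ) + 1) / n - i / n) := by
        rw [Real.norm_of_nonneg (sub_nonneg.mpr ht.1)]; gcongr; exact ht.2
    _ = C / n := by ring
  calc ‖X t - Xn i‖ ≤ ‖X t - X (i / n)‖ + ‖X (i / n) - Xn i‖ :=
        norm_sub_le_norm_sub_add_norm_sub _ _ _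
    _ ≤ _ := add_le_add hdrift
        (norm_sub_forwardPass_grid_le hσ hM hK hb hX hR hC (by omega) hKn hXn0 hXn hi.le)

end ForwardPass

theorem resnet_forward_pass_uniform_convergence_general
    (d : ℕ) (Lσ : ℝ) (hLσ : 0 ≤ Lσ)
    (σ : EuclideanSpace ℝ (Fin d) → EuclideanSpace ℝ (Fin d))
    (hσ : ∀ y z, ‖σ y - σ z‖ ≤ Lσ * ‖y - z‖)
    (K : ℝ → EuclideanSpace ℝ (Fin d) →L[ℝ] EuclideanSpace ℝ (Fin d))
    (b : ℝ → EuclideanSpace ℝ (Fin d))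
    (hKcont : ContinuousOn K (Icc 0 1)) (hbcont : ContinuousOn b (Icc 0 1))
    (Kn : ℕ → ℕ → EuclideanSpace ℝ (Fin d) →L[ℝ] EuclideanSpace ℝ (Fin d))
    (bn : ℕ → ℕ → EuclideanSpace ℝ (Fin d))
    (M : ℝ) (hbdd : ∀ n : ℕ, ∀ i < n, ‖Kn n i‖ ≤ M ∧ ‖bn n i‖ ≤ M)
    (hKconv : (fun n : ℕ => ∑ i ∈ Finset.range n,
        (∫ t in ((i : ℝ) / n)..(((i : ℝ) + 1) / n), ‖K t - Kn n i‖) ^ 2)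
      =o[atTop] fun n : ℕ => 1 / (n : ℝ))
    (hbconv : (fun n : ℕ => ∑ i ∈ Finset.range n,
        (∫ t in ((i : ℝ) / n)..(((i : ℝ) + 1) / n), ‖b t - bn n i‖) ^ 2)
      =o[atTop] fun n : ℕ => 1 / (n : ℝ))
    (x : EuclideanSpace ℝ (Fin d)) (X : ℝ → EuclideanSpace ℝ (Fin d))
    (hX0 : X 0 = x)
    (hX : ∀ t ∈ Icc (0:ℝ) 1, HasDerivAt X (σ (K t (X t) + b t)) t)
    (Xn : ℕ → ℕ → EuclideanSpace ℝ (Fin d))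
    (hXn0 : ∀ n, Xn n 0 = x)
    (hXnrec : ∀ n : ℕ, ∀ i < n,
      Xn n (i + 1) = Xn n i + ((n : ℝ)⁻¹) • σ (Kn n i (Xn n i) + bn n i)) :
    ∀ ε > 0, ∃ N : ℕ, ∀ n ≥ N, ∀ i < n, ∀ t ∈ Icc ((i : ℝ) / n) (((i : ℝ) + 1) / n),
      ‖X t - Xn n i‖ < ε := by
  intro ε hε
  have hσL : LipschitzWith ⟨Lσ, hLσ⟩ σ :=
    LipschitzWith.of_dist_le_mul fun y z => by rw [dist_eq_norm, dist_eq_norm]; exact hσ y z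
  have hM : 0 ≤ M := (norm_nonneg _).trans (hbdd 1 0 one_pos).1
  have hXcont : ContinuousOn X (Icc 0 1) := fun t ht => (hX t ht).continuousAt.continuousWithinAt
  obtain ⟨R, hR⟩ := isCompact_Icc.exists_bound_of_continuousOn hXcont
  obtain ⟨C, hC⟩ := isCompact_Icc.exists_bound_of_continuousOn
    (hσL.continuous.comp_continuousOn ((hKcont.clm_apply hXcont).add hbcont))
  have hlim : Tendsto (fun n : ℕ => C / n + Real.exp (Lσ * M) *
      (Lσ * (R * (∑ j ∈ range n, ∫ u in (j : ℝ) / n..((j : ℝ) + 1) / n, ‖K u - Kn n j‖)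
        + (∑ j ∈ range n, ∫ u in (j : ℝ) / n..((j : ℝ) + 1) / n, ‖b u - bn n j‖) + M * C / n)))
      atTop (𝓝 0) := by
    simpa using (tendsto_const_div_atTop_nhds_zero_nat C).add
      (((((tendsto_sum_of_sum_sq_isLittleO_inv hKconv).const_mul R).add
        (tendsto_sum_of_sum_sq_isLittleO_inv hbconv)).add
        (tendsto_const_div_atTop_nhds_zero_nat _)).const_mul Lσ |>.const_mul _)
  obtain ⟨N, hN⟩ := eventually_atTop.mp (hlim.eventually (gt_mem_nhds hε))
  refine ⟨N, fun n hn i hi t ht => lt_of_le_of_lt ?_ (hN n hn)⟩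
  exact norm_sub_forwardPass_le hσL hM hKcont hbcont hX hR hC (fun j hj => (hbdd n j hj).1)
    (by rw [hXn0, hX0]) (hXnrec n) hi ht

/-- Uniform convergence of the ResNet forward pass to the ODE solution under
`L²`-type convergence of the discrete parameters. -/
theorem resnet_forward_pass_uniform_convergence
    (d : ℕ) (Lσ : ℝ) (hLσ : 0 ≤ Lσ)
    (σ : EuclideanSpace ℝ (Fin d) → EuclideanSpace ℝ (Fin d))
    (hσ : ∀ y z, ‖σ y - σ z‖ ≤ Lσ * ‖y - z‖) (hσ0 : σ 0 = 0)
    (K : ℝ → EuclideanSpace ℝ (Fin d) →L[ℝ] EuclideanSpace ℝ (Fin d))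
    (b : ℝ → EuclideanSpace ℝ (Fin d))
    (hKcont : ContinuousOn K (Icc 0 1)) (hbcont : ContinuousOn b (Icc 0 1))
    (Kn : ℕ → ℕ → EuclideanSpace ℝ (Fin d) →L[ℝ] EuclideanSpace ℝ (Fin d))
    (bn : ℕ → ℕ → EuclideanSpace ℝ (Fin d))
    (M : ℝ) (hbdd : ∀ n : ℕ, ∀ i < n, ‖Kn n i‖ ≤ M ∧ ‖bn n i‖ ≤ M)
    (hKconv : (fun n : ℕ => ∑ i ∈ Finset.range n,
        (∫ t in ((i : ℝ) / n)..(((i : ℝ) + 1) / n), ‖K t - Kn n i‖) ^ 2)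
      =o[atTop] fun n : ℕ => 1 / (n : ℝ))
    (hbconv : (fun n : ℕ => ∑ i ∈ Finset.range n,
        (∫ t in ((i : ℝ) / n)..(((i : ℝ) + 1) / n), ‖b t - bn n i‖) ^ 2)
      =o[atTop] fun n : ℕ => 1 / (n : ℝ))
    (x : EuclideanSpace ℝ (Fin d)) (X : ℝ → EuclideanSpace ℝ (Fin d))
    (hX0 : X 0 = x)
    (hX : ∀ t ∈ Icc (0:ℝ) 1, HasDerivAt X (σ (K t (X t) + b t)) t)
    (Xn : ℕ → ℕ → EuclideanSpace ℝ (Fin d))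
    (hXn0 : ∀ n, Xn n 0 = x)
    (hXnrec : ∀ n : ℕ, ∀ i < n,
      Xn n (i + 1) = Xn n i + ((n : ℝ)⁻¹) • σ (Kn n i (Xn n i) + bn n i)) :
    ∀ ε > 0, ∃ N : ℕ, ∀ n ≥ N, ∀ i < n, ∀ t ∈ Icc ((i : ℝ) / n) (((i : ℝ) + 1) / n),
      ‖X t - Xn n i‖ < ε :=
  resnet_forward_pass_uniform_convergence_general d Lσ hLσ σ hσ K b hKcont hbcont Kn bn M hbdd
    hKconv hbconv x X hX0 hX Xn hXn0 hXnrec
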